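/- Let α ≠ 0 real, ρ > 0, and define γ(ω) = −(1/2)·ln(((1+ω²)² + α²ω²)/((α²+ω²)·sinc²(ρω))) for ω with sinc(ρω) ≠ 0. Then γ(0) = ln|α|, γ'(0) = 0, and if |α| > α* := √(√2 − 1) then ω = 0 is a global maximum of γ for every ρ ≥ 0. -/
import Mathlib


/-- `sinc x = sin x / x` for `x ≠ 0` and `1` at `x = 0`. -/
noncomputable def sinc (x : ℝ) : ℝ := if x = 0 then 1 else Real.sin x / x

/-- Spectral curve of the 2×2 system of Example 2. -/
noncomputable def γcurve (α ρ ω : ℝ) : ℝ :=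
  -(1 / 2) * Real.log (((1 + ω ^ 2) ^ 2 + α ^ 2 * ω ^ 2) / ((α ^ 2 + ω ^ 2) * (sinc (ρ * ω)) ^ 2))

lemma sinc_neg (x : ℝ) : sinc (-x) = sinc x := by
  unfold sinc
  rcases eq_or_ne x 0 with h | h
  · simp [h]
  · rw [if_neg (by simpa using h), if_neg h, Real.sin_neg, neg_div_neg_eq]

lemma γcurve_even (α ρ ω : ℝ) : γcurve α ρ (-ω) = γcurve α ρ ω := by
  unfold γcurve
  rw [mul_neg, sinc_neg, neg_pow]
  norm_num

lemma sinc_sq_le_one (x : ℝ) : sinc x ^ 2 ≤ 1 := by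
  unfold sinc
  rcases eq_or_ne x 0 with h | h
  · simp [h]
  · rw [if_neg h, div_pow, div_le_one (by positivity)]
    exact Real.sin_sq_le_sq

lemma γcurve_zero (α ρ : ℝ) (hα : α ≠ 0) : γcurve α ρ 0 = Real.log |α| := by
  have h : ((1 + (0:ℝ) ^ 2) ^ 2 + α ^ 2 * 0 ^ 2) / ((α ^ 2 + 0 ^ 2) * (sinc (ρ * 0)) ^ 2)
      = (α ^ 2)⁻¹ := by
    simp [sinc]
  rw [γcurve, h, Real.log_inv, Real.log_pow, ← Real.log_abs]
  push_cast
  ring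

/-- `γ(0) = ln|α|`, `γ'(0) = 0`, and if `|α| > α* = √(√2−1)` then `ω = 0` is a global
maximum of `γ` for every `ρ ≥ 0`. -/
theorem example2_curve (α ρ : ℝ) (hα : α ≠ 0) (hρ : 0 < ρ) :
    γcurve α ρ 0 = Real.log |α| ∧
    deriv (γcurve α ρ) 0 = 0 ∧
    (Real.sqrt (Real.sqrt 2 - 1) < |α| →
      ∀ ρ' : ℝ, 0 ≤ ρ' → ∀ ω : ℝ, sinc (ρ' * ω) ≠ 0 → γcurve α ρ' ω ≤ γcurve α ρ' 0) := by
  refine ⟨γcurve_zero α ρ hα, ?_, ?_⟩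
  · have h1 : (fun x => γcurve α ρ (-x)) = γcurve α ρ := funext fun x => γcurve_even α ρ x
    have h2 := deriv_comp_neg (γcurve α ρ) (0 : ℝ)
    rw [h1, neg_zero] at h2
    linarith
  · intro hstar ρ' hρ' ω hs
    have hax : Real.sqrt 2 - 1 < α ^ 2 := by
      have h0 : (0:ℝ) ≤ Real.sqrt 2 - 1 := by
        have : (1:ℝ) ≤ Real.sqrt 2 := by
          rw [show (1:ℝ) = Real.sqrt 1 by simp]
          exact Real.sqrt_le_sqrt (by norm_num)
        linarith
      calc Real.sqrt 2 - 1 = Real.sqrt (Real.sqrt 2 - 1) ^ 2 := (Real.sq_sqrt h0).symm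
        _ < |α| ^ 2 := by
            exact pow_lt_pow_left₀ hstar (Real.sqrt_nonneg _) (by norm_num)
        _ = α ^ 2 := sq_abs α
    have hkey : 1 ≤ α ^ 2 * α ^ 2 + 2 * α ^ 2 := by
      nlinarith [Real.sq_sqrt (show (0:ℝ) ≤ 2 by norm_num), Real.sqrt_nonneg 2]
    set N : ℝ := (1 + ω ^ 2) ^ 2 + α ^ 2 * ω ^ 2 with hN
    set D : ℝ := (α ^ 2 + ω ^ 2) * (sinc (ρ' * ω)) ^ 2 with hD
    have hNpos : 0 < N := by positivity
    have hspos : 0 < (sinc (ρ' * ω)) ^ 2 := by positivity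
    have hDpos : 0 < D := by positivity
    have hmain : D ≤ α ^ 2 * N := by
      have h1 : D ≤ α ^ 2 + ω ^ 2 := by
        have := mul_le_mul_of_nonneg_left (sinc_sq_le_one (ρ' * ω))
          (show (0:ℝ) ≤ α ^ 2 + ω ^ 2 by positivity)
        simpa [hD] using this
      have h2 : α ^ 2 + ω ^ 2 ≤ α ^ 2 * N := by
        rw [hN]
        nlinarith [mul_nonneg (sq_nonneg ω) (show (0:ℝ) ≤ α ^ 2 * α ^ 2 + 2 * α ^ 2 - 1 by linarith),
          mul_nonneg (sq_nonneg (ω * ω)) (sq_nonneg α)]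
      linarith
    rw [γcurve_zero α ρ' hα]
    unfold γcurve
    rw [← hN, ← hD, show Real.log |α| = (1/2) * Real.log (α ^ 2) by
      rw [Real.log_abs, Real.log_pow]; push_cast; ring]
    have hlog : Real.log ((α ^ 2)⁻¹) ≤ Real.log (N / D) := by
      apply Real.log_le_log (by positivity)
      rw [le_div_iff₀ hDpos, inv_mul_le_iff₀ (by positivity)]
      linarith [hmain]
    rw [Real.log_inv] at hlog
    linarith
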